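/- Let T be a contraction on a complex Hilbert space H and let A be a bounded operator on H with AT = TA. Define the bounded map D : H → ℓ²(ℕ, 𝒟_{T*}) by Dh := (D_{T*} T*ᵏ h)_{k≥0}. Let E and F be bounded operators on 𝒟_{T*}, set Φ(z) = E* + zF, and let M_Φ := (E*)~ + S∘F̃ on ℓ²(ℕ, 𝒟_{T*}). Then M_Φ* ∘ D = D ∘ A* if and only if D_{T*} A* h = E (D_{T*} h) + F* (D_{T*} T* h) for all h ∈ H. -/

import Mathlib

noncomputable section

open scoped ENNReal

namespace GammaModel

variable {E : Type*} [NormedAddCommGroup E] [NormedSpace ℂ E]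

/-- The `E`-valued Hardy space `H²_E(𝔻)`, identified with `ℓ²(ℕ, E)`. -/
abbrev L2 (E : Type*) [NormedAddCommGroup E] [NormedSpace ℂ E] : Type _ :=
  lp (fun _ : ℕ => E) 2

/-- The underlying function of the unilateral shift. -/
def shiftFun (f : ℕ → E) : ℕ → E
  | 0 => 0
  | (k + 1) => f k

lemma rpow_toReal_two (x : ℝ) : x ^ ((2 : ℝ≥0∞)).toReal = x ^ (2 : ℕ) := by
  rw [show ((2 : ℝ≥0∞)).toReal = ((2 : ℕ) : ℝ) by norm_num, Real.rpow_natCast]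

lemma summable_sq_of_mem (f : L2 E) :
    Summable (fun k => ‖(f : ∀ _ : ℕ, E) k‖ ^ (2 : ℕ)) := by
  have h := lp.memℓp f
  rw [memℓp_gen_iff (by norm_num)] at h
  simpa [rpow_toReal_two] using h

lemma memℓp_shiftFun (f : L2 E) : Memℓp (shiftFun (f : ∀ _ : ℕ, E)) 2 := by
  rw [memℓp_gen_iff (by norm_num)]
  apply (summable_nat_add_iff 1).mp
  simpa [shiftFun, rpow_toReal_two] using summable_sq_of_mem f

/-- The unilateral shift as a linear map on `ℓ²(ℕ, E)`. -/
def shiftLM : L2 E →ₗ[ℂ] L2 E where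
  toFun f := ⟨shiftFun (f : ∀ _ : ℕ, E), memℓp_shiftFun f⟩
  map_add' f g := by
    ext k
    cases k <;> simp [shiftFun, lp.coeFn_add, Pi.add_apply] <;> erw [Pi.add_apply] <;> simp [shiftFun]
  map_smul' c f := by
    ext k
    cases k <;> simp [shiftFun, lp.coeFn_smul, Pi.smul_apply]

lemma norm_shiftLM (f : L2 E) : ‖shiftLM f‖ = ‖f‖ := by
  have h2 : (0:ℝ) < ((2 : ℝ≥0∞)).toReal := by norm_num
  have hs := lp.norm_rpow_eq_tsum h2 (shiftLM f)
  have hf := lp.norm_rpow_eq_tsum h2 f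
  have hsum : Summable (fun k => ‖(shiftLM f : ∀ _ : ℕ, E) k‖ ^ ((2:ℝ≥0∞)).toReal) := by
    have h := memℓp_shiftFun f
    rw [memℓp_gen_iff h2] at h
    exact h
  have key : ∑' k, ‖(shiftLM f : ∀ _ : ℕ, E) k‖ ^ ((2:ℝ≥0∞)).toReal
      = ∑' k, ‖(f : ∀ _ : ℕ, E) k‖ ^ ((2:ℝ≥0∞)).toReal := by
    rw [Summable.tsum_eq_zero_add hsum]
    simp [shiftLM, shiftFun]
  have : ‖shiftLM f‖ ^ ((2:ℝ≥0∞)).toReal = ‖f‖ ^ ((2:ℝ≥0∞)).toReal := by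
    rw [hs, hf, key]
  rw [rpow_toReal_two, rpow_toReal_two] at this
  have h1 : (0:ℝ) ≤ ‖shiftLM f‖ := norm_nonneg _
  have h2' : (0:ℝ) ≤ ‖f‖ := norm_nonneg _
  nlinarith [this, h1, h2']

/-- The unilateral shift `S` on `ℓ²(ℕ, E)`: `(Sf)(0) = 0`, `(Sf)(k+1) = f(k)`. -/
def shiftL : L2 E →L[ℂ] L2 E :=
  LinearMap.mkContinuous shiftLM 1 (fun f => by rw [norm_shiftLM]; simp)

@[simp] lemma shiftL_apply_zero (f : L2 E) : (shiftL f : ∀ _ : ℕ, E) 0 = 0 := rfl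

@[simp] lemma shiftL_apply_succ (f : L2 E) (k : ℕ) :
    (shiftL f : ∀ _ : ℕ, E) (k + 1) = (f : ∀ _ : ℕ, E) k := rfl

lemma memℓp_diagFun (C : E →L[ℂ] E) (f : L2 E) :
    Memℓp (fun k => C ((f : ∀ _ : ℕ, E) k)) 2 := by
  rw [memℓp_gen_iff (by norm_num)]
  have hf := summable_sq_of_mem f
  refine Summable.of_nonneg_of_le (f := fun k => ‖C‖ ^ (2:ℕ) * ‖(f : ∀ _ : ℕ, E) k‖ ^ (2:ℕ))
    (fun k => by positivity) (fun k => ?_) (hf.mul_left _)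
  show ‖C ((f : ∀ _ : ℕ, E) k)‖ ^ ((2:ℝ≥0∞)).toReal ≤ ‖C‖ ^ (2:ℕ) * ‖(f : ∀ _ : ℕ, E) k‖ ^ (2:ℕ)
  rw [rpow_toReal_two, ← mul_pow]
  exact pow_le_pow_left₀ (norm_nonneg _) (C.le_opNorm _) 2

/-- The diagonal operator `C̃` on `ℓ²(ℕ, E)`: `(C̃ f)(k) = C (f k)`. -/
def diagLM (C : E →L[ℂ] E) : L2 E →ₗ[ℂ] L2 E where
  toFun f := ⟨fun k => C ((f : ∀ _ : ℕ, E) k), memℓp_diagFun C f⟩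
  map_add' f g := by ext k; simp [lp.coeFn_add, Pi.add_apply]; rfl
  map_smul' c f := by ext k; simp [lp.coeFn_smul, Pi.smul_apply]

lemma norm_diagLM (C : E →L[ℂ] E) (f : L2 E) : ‖diagLM C f‖ ≤ ‖C‖ * ‖f‖ := by
  have h2 : (0:ℝ) < ((2 : ℝ≥0∞)).toReal := by norm_num
  have hs := lp.norm_rpow_eq_tsum h2 (diagLM C f)
  have hf := lp.norm_rpow_eq_tsum h2 f
  have hsum : Summable (fun k => ‖(diagLM C f : ∀ _ : ℕ, E) k‖ ^ ((2:ℝ≥0∞)).toReal) := by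
    have h := memℓp_diagFun C f
    rw [memℓp_gen_iff h2] at h
    exact h
  have hle : ‖diagLM C f‖ ^ (2:ℕ) ≤ (‖C‖ * ‖f‖) ^ (2:ℕ) := by
    rw [← rpow_toReal_two, hs]
    calc ∑' k, ‖(diagLM C f : ∀ _ : ℕ, E) k‖ ^ ((2:ℝ≥0∞)).toReal
        ≤ ∑' k, ‖C‖ ^ (2:ℕ) * ‖(f : ∀ _ : ℕ, E) k‖ ^ (2:ℕ) := by
          apply Summable.tsum_le_tsum _ hsum ((summable_sq_of_mem f).mul_left _)
          intro k
          show ‖(diagLM C f : ∀ _ : ℕ, E) k‖ ^ ((2:ℝ≥0∞)).toReal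
            ≤ ‖C‖ ^ (2:ℕ) * ‖(f : ∀ _ : ℕ, E) k‖ ^ (2:ℕ)
          rw [rpow_toReal_two, ← mul_pow]
          exact pow_le_pow_left₀ (norm_nonneg _) (C.le_opNorm _) 2
      _ = ‖C‖ ^ (2:ℕ) * ∑' k, ‖(f : ∀ _ : ℕ, E) k‖ ^ (2:ℕ) := by rw [tsum_mul_left]
      _ = (‖C‖ * ‖f‖) ^ (2:ℕ) := by
          rw [mul_pow]
          congr 1
          rw [← rpow_toReal_two ‖f‖, hf]
          exact (tsum_congr (fun k => by rw [rpow_toReal_two])).symm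
  have := le_of_pow_le_pow_left₀ (by norm_num) (by positivity) hle
  exact this

/-- The operator `C̃` on `ℓ²(ℕ, E)` induced by `C : E →L[ℂ] E`, `(C̃ f)(k) = C (f k)`. -/
def diagL (C : E →L[ℂ] E) : L2 E →L[ℂ] L2 E :=
  LinearMap.mkContinuous (diagLM C) ‖C‖ (norm_diagLM C)

@[simp] lemma diagL_apply (C : E →L[ℂ] E) (f : L2 E) (k : ℕ) :
    (diagL C f : ∀ _ : ℕ, E) k = C ((f : ∀ _ : ℕ, E) k) := rfl

end GammaModel

namespace GammaModel

instance completeSpace_topologicalClosure {H : Type*} [NormedAddCommGroup H] [NormedSpace ℂ H]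
    [CompleteSpace H] (K : Submodule ℂ H) : CompleteSpace ↥(K.topologicalClosure) :=
  K.isClosed_topologicalClosure.completeSpace_coe

end GammaModel

/-!
Testing against sequences supported at a single index shows that `M_Φ*` acts coordinatewise:
`(M_Φ* f)ₖ = E fₖ + F* fₖ₊₁`. As `(D h)ₖ = D_{T*} T*ᵏ h` and `T*` commutes with `A*`, the `k`-th
coordinate of `M_Φ* D h = D A* h` is the fundamental equation at the vector `T*ᵏ h`; its `k = 0`
instance is the fundamental equation at `h` itself.
-/

namespace GammaModel

open ContinuousLinearMap

section

variable {E : Type*} [NormedAddCommGroup E] [NormedSpace ℂ E]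

lemma shiftL_single (k : ℕ) (x : E) :
    shiftL (lp.single 2 k x) = lp.single 2 (k + 1) x := by
  ext j
  cases j <;> simp [Pi.single_apply]

lemma diagL_single (C : E →L[ℂ] E) (k : ℕ) (x : E) :
    diagL C (lp.single 2 k x) = lp.single 2 k (C x) := by
  ext j
  simp [Pi.single_apply, apply_ite C]

end

variable {E : Type*} [NormedAddCommGroup E] [InnerProductSpace ℂ E] [CompleteSpace E]

lemma adjoint_apply_eq_of_inner {M : L2 E →L[ℂ] L2 E} {f : L2 E} {k : ℕ} {v : E}
    (hv : ∀ x : E, inner ℂ v x = inner ℂ f (M (lp.single 2 k x))) :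
    (adjoint M f : ∀ _ : ℕ, E) k = v := by
  classical
  refine ext_inner_right ℂ fun x => ?_
  rw [hv, ← adjoint_inner_left, lp.inner_single_right]

lemma adjoint_diagL_apply (C : E →L[ℂ] E) (f : L2 E) (k : ℕ) :
    (adjoint (diagL C) f : ∀ _ : ℕ, E) k = adjoint C ((f : ∀ _ : ℕ, E) k) :=
  adjoint_apply_eq_of_inner fun x => by
    rw [diagL_single, lp.inner_single_right, adjoint_inner_left]

lemma adjoint_shiftL_apply (f : L2 E) (k : ℕ) :
    (adjoint (shiftL : L2 E →L[ℂ] L2 E) f : ∀ _ : ℕ, E) k = (f : ∀ _ : ℕ, E) (k + 1) :=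
  adjoint_apply_eq_of_inner fun x => by
    rw [shiftL_single, lp.inner_single_right]

lemma adjoint_toeplitz_apply (A B : E →L[ℂ] E) (f : L2 E) (k : ℕ) :
    (adjoint (diagL A + shiftL.comp (diagL B)) f : ∀ _ : ℕ, E) k
      = adjoint A ((f : ∀ _ : ℕ, E) k) + adjoint B ((f : ∀ _ : ℕ, E) (k + 1)) := by
  rw [map_add, adjoint_comp, add_apply, lp.coeFn_add, Pi.add_apply, comp_apply,
    adjoint_diagL_apply, adjoint_diagL_apply, adjoint_shiftL_apply]

theorem adjoint_toeplitz_comp_eq_comp_iff {H : Type*} [NormedAddCommGroup H] [NormedSpace ℂ H]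
    {B C : H →L[ℂ] H} (hBC : Commute B C) (d : H →L[ℂ] E) (D : H →L[ℂ] L2 E)
    (hD : ∀ (h : H) (k : ℕ), (D h : ∀ _ : ℕ, E) k = d ((B ^ k) h)) (P Q : E →L[ℂ] E) :
    (adjoint (diagL (adjoint P) + shiftL.comp (diagL Q))).comp D = D.comp C
      ↔ ∀ h : H, d (C h) = P (d h) + adjoint Q (d (B h)) := by
  have coord : ∀ (h : H) (k : ℕ),
      (((adjoint (diagL (adjoint P) + shiftL.comp (diagL Q))).comp D h : ∀ _ : ℕ, E) k)
        = P (d ((B ^ k) h)) + adjoint Q (d ((B ^ (k + 1)) h)) := by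
    intro h k
    rw [comp_apply, adjoint_toeplitz_apply, adjoint_adjoint, hD, hD]
  constructor
  · intro hDC h
    have h0 := congrArg (fun g : L2 E => (g : ∀ _ : ℕ, E) 0) (DFunLike.congr_fun hDC h)
    dsimp only at h0
    rw [coord, comp_apply, hD, pow_zero, pow_one, one_apply_eq_self] at h0
    exact h0.symm
  · intro hfund
    ext h k
    have hCk : (B ^ k) (C h) = C ((B ^ k) h) := DFunLike.congr_fun (hBC.pow_left k).eq h
    rw [coord, comp_apply, hD, hCk, hfund, pow_succ']
    rfl

end GammaModel

open GammaModel ContinuousLinearMap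

theorem intertwine_iff_fundamental_equation_general {H : Type*}
    [NormedAddCommGroup H] [InnerProductSpace ℂ H] [CompleteSpace H]
    (T : H →L[ℂ] H)
    (DT : H →L[ℂ] H)
    (DD : H →L[ℂ] L2 ↥((LinearMap.range (DT : H →ₗ[ℂ] H)).topologicalClosure))
    (hDD : ∀ (h : H) (k : ℕ),
      ((DD h : ∀ _ : ℕ, ↥((LinearMap.range (DT : H →ₗ[ℂ] H)).topologicalClosure)) k : H)
        = DT ((adjoint T ^ k) h))
    (A : H →L[ℂ] H) (hAT : A * T = T * A)
    (Eop Fop : ↥((LinearMap.range (DT : H →ₗ[ℂ] H)).topologicalClosure)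
      →L[ℂ] ↥((LinearMap.range (DT : H →ₗ[ℂ] H)).topologicalClosure)) :
    (adjoint (diagL (adjoint Eop) + shiftL.comp (diagL Fop))).comp DD = DD.comp (adjoint A)
    ↔ ∀ h : H,
        DT (adjoint A h)
          = (↑(Eop ⟨DT h, Submodule.le_topologicalClosure _ (LinearMap.mem_range_self _ _)⟩) : H)
          + (↑((adjoint Fop)
              ⟨DT (adjoint T h),
                Submodule.le_topologicalClosure _ (LinearMap.mem_range_self _ _)⟩) : H) := by
  let d := DT.codRestrict (LinearMap.range (DT : H →ₗ[ℂ] H)).topologicalClosure fun h =>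
    Submodule.le_topologicalClosure _ (LinearMap.mem_range_self _ h)
  have hcomm : Commute (adjoint T) (adjoint A) := by
    simpa only [star_eq_adjoint] using (Commute.star_star (x := A) (y := T) hAT).symm
  rw [adjoint_toeplitz_comp_eq_comp_iff hcomm d DD (fun h k => Subtype.ext (hDD h k))]
  exact forall_congr' fun h => Subtype.ext_iff

/-- Let `T` be a contraction with defect operator `D_{T*}` and defect space
`𝒟_{T*} = closure (range D_{T*})`, let `D h := (D_{T*} T*ᵏ h)_k` and let `A` commute with `T`.
For operators `E, F` on `𝒟_{T*}` and `M_Φ = (E*)~ + S∘F̃` one has `M_Φ* ∘ D = D ∘ A*` iff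
`D_{T*} A* h = E (D_{T*} h) + F* (D_{T*} T* h)` for all `h`. -/
theorem intertwine_iff_fundamental_equation {H : Type*}
    [NormedAddCommGroup H] [InnerProductSpace ℂ H] [CompleteSpace H]
    (T : H →L[ℂ] H) (hT : ‖T‖ ≤ 1)
    (DT : H →L[ℂ] H) (hDTpos : DT.IsPositive)
    (hDTsq : DT * DT = 1 - T * adjoint T)
    (DD : H →L[ℂ] L2 ↥((LinearMap.range (DT : H →ₗ[ℂ] H)).topologicalClosure))
    (hDD : ∀ (h : H) (k : ℕ),
      ((DD h : ∀ _ : ℕ, ↥((LinearMap.range (DT : H →ₗ[ℂ] H)).topologicalClosure)) k : H)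
        = DT ((adjoint T ^ k) h))
    (A : H →L[ℂ] H) (hAT : A * T = T * A)
    (Eop Fop : ↥((LinearMap.range (DT : H →ₗ[ℂ] H)).topologicalClosure)
      →L[ℂ] ↥((LinearMap.range (DT : H →ₗ[ℂ] H)).topologicalClosure)) :
    (adjoint (diagL (adjoint Eop) + shiftL.comp (diagL Fop))).comp DD = DD.comp (adjoint A)
    ↔ ∀ h : H,
        DT (adjoint A h)
          = (↑(Eop ⟨DT h, Submodule.le_topologicalClosure _ (LinearMap.mem_range_self _ _)⟩) : H)
          + (↑((adjoint Fop)
              ⟨DT (adjoint T h),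
                Submodule.le_topologicalClosure _ (LinearMap.mem_range_self _ _)⟩) : H) :=
  intertwine_iff_fundamental_equation_general T DT DD hDD A hAT Eop Fop
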